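/- arXiv:2008.02233 — 2 statements merged into one kernel-verified Lean document; each statement's English description precedes it below -/
import Mathlib

section
/- Let g : ℂ → ℝ be a function satisfying g(1/x) = |x|⁴ · g(x) for all nonzero x ∈ ℂ. Define T[g](x) = g(x) + g(x/(x-1))/|x-1|⁴ + g(1-x). Then T[g](1-x) = T[g](x) for all x ∈ ℂ with x ≠ 0 and x ≠ 1. -/
/- With y = x - 1 and z = x, the middle term g(y/z)/‖z‖⁴ of T is symmetric in (y, z) by the
inversion symmetry of g, while x ↦ 1 - x swaps the outer terms and sends (x - 1, x) to (-x, 1 - x),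
i.e. swaps y and z up to a common sign. -/

theorem div_norm_pow_comm_of_inv {𝕜 : Type*} [NormedField 𝕜] {g : 𝕜 → ℝ} {n : ℕ}
    (hg : ∀ x : 𝕜, x ≠ 0 → g (1 / x) = ‖x‖ ^ n * g x) {y z : 𝕜} (hy : y ≠ 0) (hz : z ≠ 0) :
    g (z / y) / ‖y‖ ^ n = g (y / z) / ‖z‖ ^ n := by
  have hinv : g (z / y) = (‖y‖ / ‖z‖) ^ n * g (y / z) := by
    rw [← one_div_div, hg _ (div_ne_zero hy hz), norm_div]
  have hy' : ‖y‖ ≠ 0 := norm_ne_zero_iff.mpr hy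
  have hz' : ‖z‖ ≠ 0 := norm_ne_zero_iff.mpr hz
  rw [hinv, div_pow]
  field_simp

theorem stmt_10 (g : ℂ → ℝ)
    (hg : ∀ x : ℂ, x ≠ 0 → g (1/x) = ‖x‖ ^ 4 * g x)
    (T : ℂ → ℝ)
    (hT : ∀ x : ℂ, T x = g x + g (x/(x-1)) / ‖x-1‖ ^ 4 + g (1-x)) :
    ∀ x : ℂ, x ≠ 0 → x ≠ 1 → T (1-x) = T x := by
  intro x hx0 hx1
  have hsub : (1 : ℂ) - x - 1 = -x := by ring
  have hquot : (1 - x) / -x = (x - 1) / x := by rw [div_neg, ← neg_div, neg_sub]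
  have hmiddle := div_norm_pow_comm_of_inv hg hx0 (sub_ne_zero.mpr hx1)
  rw [hT, hT, hsub, hquot, norm_neg, hmiddle, sub_sub_cancel]
  ring
end

section
/- Let g : ℂ → ℝ be a function satisfying g(1/x) = |x|⁴ · g(x) for all nonzero x ∈ ℂ. Define T[g](x) = g(x) + g(x/(x-1))/|x-1|⁴ + g(1-x). Then T[g](1/x) = |x|⁴ · T[g](x) for all x ∈ ℂ with x ≠ 0 and x ≠ 1. -/
/-
The substitution x ↦ 1/x permutes the three Möbius images x, x/(x-1), 1-x up to inversion:
1/x is the inverse of x, (1/x)/((1/x)-1) is the inverse of 1-x, and 1-1/x is the inverse of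
x/(x-1). Applying the weight-4 law of g to each term, T(1/x) is ‖x‖⁴ T(x) with its second and
third terms swapped.
-/

section WeightFour

variable {g : ℂ → ℝ} {x : ℂ}

theorem weightFour_inv_div_inv_sub_one (hg : ∀ x : ℂ, x ≠ 0 → g (1/x) = ‖x‖ ^ 4 * g x)
    (hx0 : x ≠ 0) (hx1 : x ≠ 1) :
    g (1/x / (1/x - 1)) / ‖1/x - 1‖ ^ 4 = ‖x‖ ^ 4 * g (1 - x) := by
  have h1x : (1:ℂ) - x ≠ 0 := sub_ne_zero.mpr hx1.symm
  have hdiv : 1/x / (1/x - 1) = 1 / (1 - x) := by field_simp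
  have hnorm : ‖1/x - 1‖ = ‖1 - x‖ / ‖x‖ := by
    rw [← norm_div]
    congr 1
    field_simp
  rw [hdiv, hg _ h1x, hnorm]
  have : ‖1 - x‖ ≠ 0 := norm_ne_zero_iff.mpr h1x
  have : ‖x‖ ≠ 0 := norm_ne_zero_iff.mpr hx0
  field_simp

theorem weightFour_one_sub_inv (hg : ∀ x : ℂ, x ≠ 0 → g (1/x) = ‖x‖ ^ 4 * g x)
    (hx0 : x ≠ 0) (hx1 : x ≠ 1) :
    g (1 - 1/x) = ‖x‖ ^ 4 * (g (x / (x - 1)) / ‖x - 1‖ ^ 4) := by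
  have hx1' : x - 1 ≠ 0 := sub_ne_zero.mpr hx1
  have hinv : 1 - 1/x = 1 / (x / (x - 1)) := by field_simp
  rw [hinv, hg _ (div_ne_zero hx0 hx1'), norm_div]
  have : ‖x - 1‖ ≠ 0 := norm_ne_zero_iff.mpr hx1'
  field_simp

end WeightFour

theorem stmt_11 (g : ℂ → ℝ)
    (hg : ∀ x : ℂ, x ≠ 0 → g (1/x) = ‖x‖ ^ 4 * g x)
    (T : ℂ → ℝ)
    (hT : ∀ x : ℂ, T x = g x + g (x/(x-1)) / ‖x-1‖ ^ 4 + g (1-x)) :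
    ∀ x : ℂ, x ≠ 0 → x ≠ 1 → T (1/x) = ‖x‖ ^ 4 * T x := by
  intro x hx0 hx1
  rw [hT, hT, hg x hx0, weightFour_inv_div_inv_sub_one hg hx0 hx1,
    weightFour_one_sub_inv hg hx0 hx1]
  ring
end
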